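/- Let X be a set and let 𝒜, ℬ be collections of subsets of X with 𝒜 Γ-like. Then α₃(𝒜,ℬ) holds if and only if α_{3.1}(𝒜,ℬ) holds. -/

import Mathlib

open Set

/-- A collection `𝒜` of subsets of `X` is Γ-like if every member is infinite
and every infinite subset of a member is itself a member. -/
def GammaLike {X : Type*} (𝒜 : Set (Set X)) : Prop :=
  ∀ A ∈ 𝒜, A.Infinite ∧ ∀ A' ⊆ A, A'.Infinite → A' ∈ 𝒜

/-- A collection `𝒜` is almost-Γ-like if each `A ∈ 𝒜` has a countably infinite
subset `A'` all of whose cofinite subsets belong to `𝒜`. -/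
def AlmostGammaLike {X : Type*} (𝒜 : Set (Set X)) : Prop :=
  ∀ A ∈ 𝒜, ∃ A' ⊆ A, A'.Countable ∧ A'.Infinite ∧
    ∀ A'' ⊆ A', (A' \ A'').Finite → A'' ∈ 𝒜

/-- `𝒜` is closed under finite unions. -/
def UnionClosed {X : Type*} (𝒜 : Set (Set X)) : Prop :=
  ∀ A ∈ 𝒜, ∀ B ∈ 𝒜, A ∪ B ∈ 𝒜

/-- α₁(𝒜,ℬ): for every sequence from 𝒜 there is `B ∈ ℬ` with `A n \ B` finite for all `n`. -/
def Alpha1 {X : Type*} (𝒜 ℬ : Set (Set X)) : Prop :=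
  ∀ A : ℕ → Set X, (∀ n, A n ∈ 𝒜) → ∃ B ∈ ℬ, ∀ n, (A n \ B).Finite

/-- α₂(𝒜,ℬ): for every sequence from 𝒜 there is `B ∈ ℬ` meeting each `A n` infinitely. -/
def Alpha2 {X : Type*} (𝒜 ℬ : Set (Set X)) : Prop :=
  ∀ A : ℕ → Set X, (∀ n, A n ∈ 𝒜) → ∃ B ∈ ℬ, ∀ n, (A n ∩ B).Infinite

/-- α₂'(𝒜,ℬ): for every sequence from 𝒜 there is `B ∈ ℬ` meeting each `A n`. -/
def Alpha2' {X : Type*} (𝒜 ℬ : Set (Set X)) : Prop :=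
  ∀ A : ℕ → Set X, (∀ n, A n ∈ 𝒜) → ∃ B ∈ ℬ, ∀ n, (A n ∩ B).Nonempty

/-- α₃(𝒜,ℬ): for every sequence from 𝒜 there is `B ∈ ℬ` meeting infinitely many `A n` infinitely. -/
def Alpha3 {X : Type*} (𝒜 ℬ : Set (Set X)) : Prop :=
  ∀ A : ℕ → Set X, (∀ n, A n ∈ 𝒜) → ∃ B ∈ ℬ, {n | (A n ∩ B).Infinite}.Infinite

/-- α₄(𝒜,ℬ): for every sequence from 𝒜 there is `B ∈ ℬ` meeting infinitely many `A n`. -/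
def Alpha4 {X : Type*} (𝒜 ℬ : Set (Set X)) : Prop :=
  ∀ A : ℕ → Set X, (∀ n, A n ∈ 𝒜) → ∃ B ∈ ℬ, {n | (A n ∩ B).Nonempty}.Infinite

/-- α_{1.1}(𝒜,ℬ): α₁ restricted to pairwise disjoint sequences. -/
def Alpha1p1 {X : Type*} (𝒜 ℬ : Set (Set X)) : Prop :=
  ∀ A : ℕ → Set X, (∀ n, A n ∈ 𝒜) → (∀ m n, m ≠ n → Disjoint (A m) (A n)) →
    ∃ B ∈ ℬ, ∀ n, (A n \ B).Finite

/-- α_{1.5}(𝒜,ℬ): for pairwise disjoint sequences from 𝒜 there is `B ∈ ℬ` with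
`A n \ B` finite for infinitely many `n`. -/
def Alpha1p5 {X : Type*} (𝒜 ℬ : Set (Set X)) : Prop :=
  ∀ A : ℕ → Set X, (∀ n, A n ∈ 𝒜) → (∀ m n, m ≠ n → Disjoint (A m) (A n)) →
    ∃ B ∈ ℬ, {n | (A n \ B).Finite}.Infinite

/-- α_{2.1}(𝒜,ℬ): α₂ restricted to pairwise disjoint sequences. -/
def Alpha2p1 {X : Type*} (𝒜 ℬ : Set (Set X)) : Prop :=
  ∀ A : ℕ → Set X, (∀ n, A n ∈ 𝒜) → (∀ m n, m ≠ n → Disjoint (A m) (A n)) →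
    ∃ B ∈ ℬ, ∀ n, (A n ∩ B).Infinite

/-- α_{3.1}(𝒜,ℬ): α₃ restricted to pairwise disjoint sequences. -/
def Alpha3p1 {X : Type*} (𝒜 ℬ : Set (Set X)) : Prop :=
  ∀ A : ℕ → Set X, (∀ n, A n ∈ 𝒜) → (∀ m n, m ≠ n → Disjoint (A m) (A n)) →
    ∃ B ∈ ℬ, {n | (A n ∩ B).Infinite}.Infinite

/-- α_{4.1}(𝒜,ℬ): α₄ restricted to pairwise disjoint sequences. -/
def Alpha4p1 {X : Type*} (𝒜 ℬ : Set (Set X)) : Prop :=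
  ∀ A : ℕ → Set X, (∀ n, A n ∈ 𝒜) → (∀ m n, m ≠ n → Disjoint (A m) (A n)) →
    ∃ B ∈ ℬ, {n | (A n ∩ B).Nonempty}.Infinite

/-- Player I has a winning predetermined strategy in G₁(𝒜,ℬ). -/
def PredWinG1 {X : Type*} (𝒜 ℬ : Set (Set X)) : Prop :=
  ∃ A : ℕ → Set X, (∀ n, A n ∈ 𝒜) ∧
    ∀ a : ℕ → X, (∀ n, a n ∈ A n) → Set.range a ∉ ℬ

/-- Player I has a winning predetermined strategy in G_fin(𝒜,ℬ). -/
def PredWinGfin {X : Type*} (𝒜 ℬ : Set (Set X)) : Prop :=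
  ∃ A : ℕ → Set X, (∀ n, A n ∈ 𝒜) ∧
    ∀ F : ℕ → Set X, (∀ n, (F n).Finite ∧ F n ⊆ A n) → (⋃ n, F n) ∉ ℬ

/-- Player I has a winning predetermined strategy in G_{<2}(𝒜,ℬ),
where II picks at most one point each round. -/
def PredWinGlt2 {X : Type*} (𝒜 ℬ : Set (Set X)) : Prop :=
  ∃ A : ℕ → Set X, (∀ n, A n ∈ 𝒜) ∧
    ∀ F : ℕ → Set X, (∀ n, (F n).Subsingleton ∧ F n ⊆ A n) → (⋃ n, F n) ∉ ℬ

/-- Player I has a winning predetermined strategy in G_cf(𝒜,ℬ),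
where II picks a cofinite subset each round. -/
def PredWinGcf {X : Type*} (𝒜 ℬ : Set (Set X)) : Prop :=
  ∃ A : ℕ → Set X, (∀ n, A n ∈ 𝒜) ∧
    ∀ B : ℕ → Set X, (∀ n, B n ⊆ A n ∧ (A n \ B n).Finite) → (⋃ n, B n) ∉ ℬ

/-- Player I has a winning perfect-information strategy in G₁(𝒜,ℬ):
a function from finite sequences of points of X into 𝒜 defeating all counterplays. -/
def WinG1 {X : Type*} (𝒜 ℬ : Set (Set X)) : Prop :=
  ∃ σ : List X → Set X, (∀ s, σ s ∈ 𝒜) ∧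
    ∀ a : ℕ → X, (∀ n, a n ∈ σ (List.ofFn fun i : Fin n => a i)) → Set.range a ∉ ℬ

/-- Player I has a winning perfect-information strategy in G_fin(𝒜,ℬ):
a function from finite sequences of finite subsets of X into 𝒜 defeating all counterplays. -/
def WinGfin {X : Type*} (𝒜 ℬ : Set (Set X)) : Prop :=
  ∃ σ : List (Set X) → Set X, (∀ s : List (Set X), (∀ F ∈ s, F.Finite) → σ s ∈ 𝒜) ∧
    ∀ F : ℕ → Set X,
      (∀ n, (F n).Finite ∧ F n ⊆ σ (List.ofFn fun i : Fin n => F i)) →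
      (⋃ n, F n) ∉ ℬ

/-- Player I has a winning perfect-information strategy in G_{<2}(𝒜,ℬ):
a function from finite sequences of at-most-singleton subsets of X into 𝒜
defeating all counterplays. -/
def WinGlt2 {X : Type*} (𝒜 ℬ : Set (Set X)) : Prop :=
  ∃ σ : List (Set X) → Set X, (∀ s : List (Set X), (∀ F ∈ s, F.Subsingleton) → σ s ∈ 𝒜) ∧
    ∀ F : ℕ → Set X,
      (∀ n, (F n).Subsingleton ∧ F n ⊆ σ (List.ofFn fun i : Fin n => F i)) →
      (⋃ n, F n) ∉ ℬ


/-! Enumerate ℕ × ℕ by `Nat.unpair` and pick, stage by stage, a fresh point of the `A n` named by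
the first coordinate of the stage. The points picked for each `n` form infinite, pairwise disjoint
sets `D n ⊆ A n`, which lie in `𝒜` because `𝒜` is Γ-like; a `B` meeting infinitely many `D n` in
infinite sets meets the corresponding `A n` in infinite sets. -/

open Function

theorem exists_injective_forall_mem_of_infinite {X : Type*} {S : ℕ → Set X}
    (hS : ∀ n, (S n).Infinite) : ∃ f : ℕ → X, Injective f ∧ ∀ n, f n ∈ S n := by
  choose c hcS hct using fun n (t : Set X) (ht : t.Finite) ↦ (hS n).exists_notMem_finite ht
  let f : ℕ → X := fun n ↦
    Nat.strongRecOn n fun n g ↦ c n (range fun k : Iio n ↦ g k.1 k.2) (finite_range _)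
  have hfin (n : ℕ) : (f '' Iio n).Finite := (finite_Iio n).image f
  have hf (n : ℕ) : f n = c n (f '' Iio n) (hfin n) := by
    convert Nat.strongRecOn_eq _ n using 2
    exact image_eq_range f (Iio n)
  refine ⟨f, .of_lt_imp_ne fun m n hmn h ↦ ?_, fun n ↦ hf n ▸ hcS n _ (hfin n)⟩
  rw [hf n] at h
  exact hct n _ (hfin n) (h ▸ mem_image_of_mem f hmn)

theorem exists_pairwise_disjoint_infinite_subsets {X : Type*} {A : ℕ → Set X}
    (hA : ∀ n, (A n).Infinite) :
    ∃ D : ℕ → Set X, (∀ n, D n ⊆ A n) ∧ (∀ n, (D n).Infinite) ∧ Pairwise (Disjoint on D) := by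
  obtain ⟨f, hf, hfA⟩ := exists_injective_forall_mem_of_infinite fun k ↦ hA (Nat.unpair k).1
  let stages (n : ℕ) : Set ℕ := {k | (Nat.unpair k).1 = n}
  refine ⟨fun n ↦ f '' stages n, ?_, fun n ↦ ?_, fun m n hmn ↦ ?_⟩
  · rintro n _ ⟨k, rfl, rfl⟩
    exact hfA k
  · have hpair : range (Nat.pair n) ⊆ stages n := by
      rintro _ ⟨i, rfl⟩
      simp [stages]
    refine ((infinite_range_of_injective fun i j h ↦ ?_).mono hpair).image hf.injOn
    simpa using h
  · exact (disjoint_image_iff hf).2 (disjoint_left.2 fun k hm hn ↦ hmn (hm.symm.trans hn))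

/-- If 𝒜 is Γ-like, then α₃(𝒜,ℬ) holds iff α_{3.1}(𝒜,ℬ) holds. -/
theorem stmt14 {X : Type*} (𝒜 ℬ : Set (Set X))
    (hA : GammaLike 𝒜) :
    Alpha3 𝒜 ℬ ↔ Alpha3p1 𝒜 ℬ := by
  refine ⟨fun h A hA𝒜 _ ↦ h A hA𝒜, fun h A hA𝒜 ↦ ?_⟩
  obtain ⟨D, hDA, hDinf, hDdisj⟩ :=
    exists_pairwise_disjoint_infinite_subsets fun n ↦ (hA _ (hA𝒜 n)).1
  obtain ⟨B, hBℬ, hB⟩ := h D (fun n ↦ (hA _ (hA𝒜 n)).2 _ (hDA n) (hDinf n)) hDdisj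
  exact ⟨B, hBℬ, hB.mono fun n hn ↦ hn.mono (inter_subset_inter_left B (hDA n))⟩
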